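/- Peetre-type weight inequality: let I be a dyadic cube of side length 2^i containing the origin and J a dyadic cube of side length 2^{i−m} (m ≥ 0) containing the origin. Then for all x, y ∈ ℝ^d: if |y| ≥ 2|x| then ρ_J(x − y) ≥ C ρ_I(y), and if |y| ≤ 2|x| then ρ_I(x) ≥ C ρ_I(y), where C > 0 depends only on d. -/

import Mathlib

noncomputable section

/-- The concentric dilate `rI` of the axis-parallel cube with center `c` and
side length `l` (as a closed cube). -/
def dilCube {d : ℕ} (c : EuclideanSpace ℝ (Fin d)) (l r : ℝ) :
    Set (EuclideanSpace ℝ (Fin d)) := {y | ∀ n, |y n - c n| ≤ r * l / 2}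

/-- The mollified distance `ρ_I(y) = inf {r > 1 : y ∈ (2r−1)I}`. -/
def rho {d : ℕ} (c : EuclideanSpace ℝ (Fin d)) (l : ℝ) (y : EuclideanSpace ℝ (Fin d)) : ℝ :=
  sInf {r : ℝ | 1 < r ∧ y ∈ dilCube c l (2 * r - 1)}

/-- `ρ_I(F) = inf_{y ∈ F} ρ_I(y)`. -/
def rhoSet {d : ℕ} (c : EuclideanSpace ℝ (Fin d)) (l : ℝ)
    (F : Set (EuclideanSpace ℝ (Fin d))) : ℝ :=
  sInf (rho c l '' F)

/-- The dyadic cube `Q_{j,k} = ∏_n [2^j k_n, 2^j (k_n + 1))`. -/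
def dyadicCube {d : ℕ} (j : ℤ) (k : Fin d → ℤ) : Set (EuclideanSpace ℝ (Fin d)) :=
  {y | ∀ n, (2:ℝ)^j * k n ≤ y n ∧ y n < (2:ℝ)^j * (k n + 1)}

/-- The center of the dyadic cube `Q_{j,k}`. -/
def dyadicCenter {d : ℕ} (j : ℤ) (k : Fin d → ℤ) : EuclideanSpace ℝ (Fin d) :=
  WithLp.toLp 2 (fun n => (2:ℝ)^j * (k n + 1/2))

/-- The mollified distance associated to the dyadic cube `Q_{j,k}`. -/
def rhoD {d : ℕ} (j : ℤ) (k : Fin d → ℤ) (y : EuclideanSpace ℝ (Fin d)) : ℝ :=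
  rho (dyadicCenter j k) ((2:ℝ)^j) y

/-- `ρ_{Q_{j,k}}(F)`. -/
def rhoSetD {d : ℕ} (j : ℤ) (k : Fin d → ℤ) (F : Set (EuclideanSpace ℝ (Fin d))) : ℝ :=
  rhoSet (dyadicCenter j k) ((2:ℝ)^j) F

/-- The sup (ℓ∞) norm of the coordinates of a point of Euclidean space. -/
def supNorm {d : ℕ} (y : EuclideanSpace ℝ (Fin d)) : ℝ := ‖(fun n => y n : Fin d → ℝ)‖

lemma supNorm_nonneg {d : ℕ} (y : EuclideanSpace ℝ (Fin d)) : 0 ≤ supNorm y :=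
  norm_nonneg _

lemma abs_coord_le_supNorm {d : ℕ} (y : EuclideanSpace ℝ (Fin d)) (n : Fin d) :
    |y n| ≤ supNorm y := by
  simpa [supNorm, Real.norm_eq_abs] using norm_le_pi_norm (fun n => y n : Fin d → ℝ) n

lemma supNorm_le {d : ℕ} (y : EuclideanSpace ℝ (Fin d)) {r : ℝ} (hr : 0 ≤ r)
    (h : ∀ n, |y n| ≤ r) : supNorm y ≤ r := by
  rw [supNorm, pi_norm_le_iff_of_nonneg hr]
  simpa [Real.norm_eq_abs] using h

/-- `ℓ∞` norm is at most the euclidean norm. -/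
lemma supNorm_le_norm {d : ℕ} (y : EuclideanSpace ℝ (Fin d)) : supNorm y ≤ ‖y‖ := by
  refine supNorm_le y (norm_nonneg y) fun n => ?_
  rw [EuclideanSpace.norm_eq]
  calc |y n| = Real.sqrt ((y n) ^ 2) := (Real.sqrt_sq_eq_abs _).symm
    _ ≤ Real.sqrt (∑ i, ‖y i‖ ^ 2) := by
        apply Real.sqrt_le_sqrt
        have := Finset.single_le_sum (f := fun i => ‖y i‖ ^ 2)
          (fun i _ => by positivity) (Finset.mem_univ n)
        simpa [Real.norm_eq_abs, sq_abs] using this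

/-- Euclidean norm is at most `d` times the `ℓ∞` norm. -/
lemma norm_le_d_mul_supNorm {d : ℕ} (hd : 1 ≤ d) (y : EuclideanSpace ℝ (Fin d)) :
    ‖y‖ ≤ d * supNorm y := by
  have hN : 0 ≤ supNorm y := supNorm_nonneg y
  have hsq : ‖y‖ ^ 2 ≤ (d * supNorm y) ^ 2 := by
    rw [EuclideanSpace.norm_eq, Real.sq_sqrt (by positivity)]
    have h1 : ∀ i : Fin d, ‖y i‖ ^ 2 ≤ supNorm y ^ 2 := by
      intro i
      have := abs_coord_le_supNorm y i
      have h2 : ‖y i‖ = |y i| := Real.norm_eq_abs _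
      nlinarith [abs_nonneg (y i)]
    calc (∑ i, ‖y i‖ ^ 2) ≤ ∑ _i : Fin d, supNorm y ^ 2 :=
          Finset.sum_le_sum fun i _ => h1 i
      _ = d * supNorm y ^ 2 := by simp [mul_comm]
      _ ≤ (d * supNorm y) ^ 2 := by
          have hd1 : (1:ℝ) ≤ d := by exact_mod_cast hd
          nlinarith
  have h0 : (0:ℝ) ≤ d * supNorm y := by positivity
  nlinarith [norm_nonneg y]

/-- The value of `rho` for a cube of positive side length. -/
lemma rho_eq {d : ℕ} (c : EuclideanSpace ℝ (Fin d)) {l : ℝ} (hl : 0 < l)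
    (y : EuclideanSpace ℝ (Fin d)) :
    rho c l y = max 1 (supNorm (y - c) / l + 1/2) := by
  set M : ℝ := supNorm (y - c) with hM
  have hM0 : 0 ≤ M := supNorm_nonneg _
  set A : ℝ := M / l + 1/2 with hA
  have hset : {r : ℝ | 1 < r ∧ y ∈ dilCube c l (2 * r - 1)} = {r : ℝ | 1 < r ∧ A ≤ r} := by
    ext r
    simp only [Set.mem_setOf_eq, dilCube]
    constructor
    · rintro ⟨hr, h⟩
      refine ⟨hr, ?_⟩
      have hMle : M ≤ (2 * r - 1) * l / 2 := by
        apply supNorm_le _ (by nlinarith)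
        intro n
        simpa [PiLp.sub_apply] using h n
      have h5 : M / l ≤ r - 1/2 := by
        rw [div_le_iff₀ hl]; nlinarith
      rw [hA]; linarith
    · rintro ⟨hr, hAr⟩
      refine ⟨hr, fun n => ?_⟩
      have hMle : M ≤ (2 * r - 1) * l / 2 := by
        have : M / l ≤ r - 1/2 := by
          have : A ≤ r := hAr
          rw [hA] at this; linarith
        rw [div_le_iff₀ hl] at this
        nlinarith
      calc |(y - c) n| ≤ M := abs_coord_le_supNorm _ n
        _ ≤ (2 * r - 1) * l / 2 := hMle
  rw [rho, hset]
  by_cases hA1 : A ≤ 1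
  · have : {r : ℝ | 1 < r ∧ A ≤ r} = Set.Ioi 1 := by
      ext r; simp only [Set.mem_setOf_eq, Set.mem_Ioi]
      exact ⟨fun h => h.1, fun h => ⟨h, le_trans hA1 h.le⟩⟩
    rw [this, csInf_Ioi, max_eq_left hA1]
  · push_neg at hA1
    have : {r : ℝ | 1 < r ∧ A ≤ r} = Set.Ici A := by
      ext r; simp only [Set.mem_setOf_eq, Set.mem_Ici]
      exact ⟨fun h => h.2, fun h => ⟨lt_of_lt_of_le hA1 h, h⟩⟩
    rw [this, csInf_Ici, max_eq_right hA1.le]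

lemma supNorm_sub_center {d : ℕ} (j : ℤ) (y : EuclideanSpace ℝ (Fin d)) :
    supNorm y - (2:ℝ)^j / 2 ≤ supNorm (y - dyadicCenter j 0) ∧
    supNorm (y - dyadicCenter j 0) ≤ supNorm y + (2:ℝ)^j / 2 := by
  have hp : (0:ℝ) < (2:ℝ)^j := by positivity
  have hc : ∀ n : Fin d, (dyadicCenter j (0 : Fin d → ℤ)) n = (2:ℝ)^j / 2 := by
    intro n; simp [dyadicCenter]; ring
  have happ : ∀ n : Fin d, (y - dyadicCenter j 0 : EuclideanSpace ℝ (Fin d)) n = y n - (2:ℝ)^j / 2 := by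
    intro n; rw [PiLp.sub_apply, hc n]
  have hN' : 0 ≤ supNorm (y - dyadicCenter j 0) := supNorm_nonneg _
  constructor
  · rcases le_or_gt (supNorm y) ((2:ℝ)^j / 2) with h | h
    · linarith
    · have : supNorm y ≤ supNorm (y - dyadicCenter j 0) + (2:ℝ)^j / 2 := by
        apply supNorm_le _ (by linarith)
        intro n
        have h1 : |(y - dyadicCenter j 0 : EuclideanSpace ℝ (Fin d)) n| ≤ supNorm (y - dyadicCenter j 0) :=
          abs_coord_le_supNorm _ n
        rw [happ n] at h1
        have h4 : |y n| ≤ |y n - (2:ℝ)^j/2| + |(2:ℝ)^j/2| := by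
          have := abs_add_le (y n - (2:ℝ)^j/2) ((2:ℝ)^j/2)
          simpa using this
        have h3 : |(2:ℝ)^j / 2| = (2:ℝ)^j / 2 := abs_of_pos (by positivity)
        rw [h3] at h4
        linarith
      linarith
  · apply supNorm_le _ (by linarith [supNorm_nonneg y])
    intro n
    rw [happ n]
    have h1 : |y n| ≤ supNorm y := abs_coord_le_supNorm y n
    have h3 : |(2:ℝ)^j / 2| = (2:ℝ)^j / 2 := abs_of_pos (by positivity)
    have h4 : |y n - (2:ℝ)^j/2| ≤ |y n| + |(2:ℝ)^j/2| := by
      have := abs_add_le (y n) (-((2:ℝ)^j/2))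
      simpa [sub_eq_add_neg] using this
    rw [h3] at h4
    linarith

/-- Upper bound for `rhoD` at the cube containing the origin. -/
lemma rhoD_le {d : ℕ} (j : ℤ) (y : EuclideanSpace ℝ (Fin d)) :
    rhoD j 0 y ≤ 1 + supNorm y / (2:ℝ)^j := by
  have hp : (0:ℝ) < (2:ℝ)^j := by positivity
  have hN : 0 ≤ supNorm y := supNorm_nonneg y
  rw [rhoD, rho_eq _ hp]
  apply max_le
  · have : 0 ≤ supNorm y / (2:ℝ)^j := by positivity
    linarith
  · have h := (supNorm_sub_center j y).2
    have : supNorm (y - dyadicCenter j 0) / (2:ℝ)^j ≤ supNorm y / (2:ℝ)^j + 1/2 := by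
      rw [div_le_iff₀ hp] at *
      rw [div_add' _ _ _ (ne_of_gt hp), div_mul_eq_mul_div, le_div_iff₀ hp] at *
      nlinarith
    linarith

/-- Lower bound for `rhoD` at the cube containing the origin. -/
lemma rhoD_ge {d : ℕ} (j : ℤ) (y : EuclideanSpace ℝ (Fin d)) :
    (1 + supNorm y / (2:ℝ)^j) / 2 ≤ rhoD j 0 y := by
  have hp : (0:ℝ) < (2:ℝ)^j := by positivity
  have hN : 0 ≤ supNorm y := supNorm_nonneg y
  rw [rhoD, rho_eq _ hp]
  have h := (supNorm_sub_center j y).1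
  have h1 : supNorm y / (2:ℝ)^j ≤ supNorm (y - dyadicCenter j 0) / (2:ℝ)^j + 1/2 := by
    rw [div_add' _ _ _ (ne_of_gt hp), div_le_div_iff₀ hp hp]
    nlinarith
  rcases le_total (supNorm y / (2:ℝ)^j) 1 with h2 | h2
  · calc (1 + supNorm y / (2:ℝ)^j) / 2 ≤ 1 := by linarith
      _ ≤ max 1 _ := le_max_left _ _
  · calc (1 + supNorm y / (2:ℝ)^j) / 2 ≤ supNorm y / (2:ℝ)^j := by linarith
      _ ≤ supNorm (y - dyadicCenter j 0) / (2:ℝ)^j + 1/2 := h1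
      _ ≤ max 1 _ := le_max_right _ _

/-- A dyadic cube containing the origin has index `0`. -/
lemma dyadic_index_zero {d : ℕ} {j : ℤ} {k : Fin d → ℤ}
    (h : (0 : EuclideanSpace ℝ (Fin d)) ∈ dyadicCube j k) : k = 0 := by
  funext n
  have hn := h n
  have hp : (0:ℝ) < (2:ℝ)^j := by positivity
  have h0 : (0 : EuclideanSpace ℝ (Fin d)) n = 0 := rfl
  rw [h0] at hn
  obtain ⟨h1, h2⟩ := hn
  have hk1 : (k n : ℝ) ≤ 0 := by nlinarith
  have hk2 : (0:ℝ) < (k n : ℝ) + 1 := by nlinarith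
  have : k n ≤ 0 := by exact_mod_cast hk1
  have : (-1:ℤ) < k n := by exact_mod_cast (by linarith : (-1:ℝ) < (k n : ℝ))
  show k n = (0 : Fin d → ℤ) n
  simp only [Pi.zero_apply]
  omega

/-- Peetre-type weight inequalities: for a dyadic cube `I` of side `2^i` containing
the origin and a dyadic cube `J` of side `2^{i−m}` containing the origin,
if `|y| ≥ 2|x|` then `ρ_J(x−y) ≥ C ρ_I(y)`, and if `|y| ≤ 2|x|` then
`ρ_I(x) ≥ C ρ_I(y)`, with `C = C(d) > 0`. -/
theorem rho_peetre (d : ℕ) (hd : 1 ≤ d) :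
    ∃ C > (0:ℝ), ∀ (i : ℤ) (m : ℕ) (kI kJ : Fin d → ℤ),
      (0:EuclideanSpace ℝ (Fin d)) ∈ dyadicCube i kI →
      (0:EuclideanSpace ℝ (Fin d)) ∈ dyadicCube (i - m) kJ →
      ∀ x y : EuclideanSpace ℝ (Fin d),
        (2 * ‖x‖ ≤ ‖y‖ → C * rhoD i kI y ≤ rhoD (i - m) kJ (x - y)) ∧
        (‖y‖ ≤ 2 * ‖x‖ → C * rhoD i kI y ≤ rhoD i kI x) := by
  have hd1 : (1:ℝ) ≤ d := by exact_mod_cast hd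
  refine ⟨1 / (4 * d), by positivity, ?_⟩
  intro i m kI kJ hI hJ x y
  rw [dyadic_index_zero hI, dyadic_index_zero hJ]
  set p : ℝ := (2:ℝ)^i with hp'
  set q : ℝ := (2:ℝ)^(i - (m:ℤ)) with hq'
  have hp : (0:ℝ) < p := by positivity
  have hq : (0:ℝ) < q := by positivity
  have hqp : q ≤ p := by
    apply zpow_le_zpow_right₀ (by norm_num)
    omega
  have hNy : 0 ≤ supNorm y := supNorm_nonneg y
  have hNyle : supNorm y ≤ ‖y‖ := supNorm_le_norm y
  have hrhoy : rhoD i (0 : Fin d → ℤ) y ≤ 1 + supNorm y / p := rhoD_le i y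
  constructor
  · intro hxy
    have hz : ‖y‖ / 2 ≤ ‖x - y‖ := by
      have h1 : ‖y‖ - ‖x‖ ≤ ‖y - x‖ := norm_sub_norm_le y x
      rw [norm_sub_rev] at h1
      linarith
    have hzN : ‖x - y‖ ≤ d * supNorm (x - y) := norm_le_d_mul_supNorm hd (x - y)
    have hNz : 0 ≤ supNorm (x - y) := supNorm_nonneg _
    have key : supNorm y ≤ 2 * d * supNorm (x - y) := by nlinarith
    have hrhoz : (1 + supNorm (x - y) / q) / 2 ≤ rhoD (i - (m:ℤ)) (0 : Fin d → ℤ) (x - y) :=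
      rhoD_ge _ (x - y)
    have hmid : 1 / (4 * (d:ℝ)) * (1 + supNorm y / p) ≤ (1 + supNorm (x - y) / q) / 2 := by
      have h1 : supNorm y / p ≤ 2 * d * supNorm (x - y) / q := by
        gcongr
      set s : ℝ := supNorm (x - y) / q with hs'
      have hs : 0 ≤ s := by positivity
      have h2 : 2 * (d:ℝ) * supNorm (x - y) / q = 2 * d * s := by
        rw [hs']; ring
      rw [h2] at h1
      rw [div_mul_eq_mul_div, div_le_div_iff₀ (by positivity) (by norm_num)]
      nlinarith
    calc 1 / (4 * (d:ℝ)) * rhoD i (0 : Fin d → ℤ) y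
        ≤ 1 / (4 * (d:ℝ)) * (1 + supNorm y / p) := by
          apply mul_le_mul_of_nonneg_left hrhoy (by positivity)
      _ ≤ (1 + supNorm (x - y) / q) / 2 := hmid
      _ ≤ rhoD (i - (m:ℤ)) (0 : Fin d → ℤ) (x - y) := hrhoz
  · intro hyx
    have hxN : ‖x‖ ≤ d * supNorm x := norm_le_d_mul_supNorm hd x
    have hNx : 0 ≤ supNorm x := supNorm_nonneg x
    have key : supNorm y ≤ 2 * d * supNorm x := by nlinarith
    have hrhox : (1 + supNorm x / p) / 2 ≤ rhoD i (0 : Fin d → ℤ) x := rhoD_ge i x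
    have hmid : 1 / (4 * (d:ℝ)) * (1 + supNorm y / p) ≤ (1 + supNorm x / p) / 2 := by
      have h1 : supNorm y / p ≤ 2 * d * (supNorm x / p) := by
        rw [mul_div_assoc']
        gcongr
      set s : ℝ := supNorm x / p with hs'
      have hs : 0 ≤ s := by positivity
      rw [div_mul_eq_mul_div, div_le_div_iff₀ (by positivity) (by norm_num)]
      nlinarith
    calc 1 / (4 * (d:ℝ)) * rhoD i (0 : Fin d → ℤ) y
        ≤ 1 / (4 * (d:ℝ)) * (1 + supNorm y / p) := by
          apply mul_le_mul_of_nonneg_left hrhoy (by positivity)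
      _ ≤ (1 + supNorm x / p) / 2 := hmid
      _ ≤ rhoD i (0 : Fin d → ℤ) x := hrhox
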